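/- Let (y_n)_{n≥0} be a bounded sequence in a Banach space E and define g : [0,1] → E by g(t) = y_n for t ∈ [1 − 2^{−n}, 1 − 2^{−n−1}), n ∈ ℕ, and g(1) = 0. Then g is Riemann integrable on [0,1]. Conversely, if g (defined this way from a sequence (y_n)) is Riemann integrable, then (y_n) is bounded. -/

import Mathlib

/-!
A Riemann integrable map is bounded: moving a single tag of a partition of mesh `< δ` changes
the Riemann sum by `(t (j + 1) - t j) • (g s - g (t j))`, and all these sums lie within `1` of the
integral. The values `y n = g (1 - 2⁻ⁿ)` are therefore bounded.

Conversely, for bounded `y` the map `g` is Bochner integrable, and a Riemann sum of mesh `< δ`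
differs from the integral only through the pieces on which `g` is not constant. These lie within
`δ` of one of the jump points `1 - 2⁻ᵏ`, `k ≤ N`, or in `(1 - 2⁻ᴺ - δ, 1]`, a set of measure at
most `2 (N + 1) δ + 2⁻ᴺ + δ`, which is small for `N` large and then `δ` small.
-/

open MeasureTheory Set Filter Topology

/-- Riemann integrability of a Banach-valued map on `[a,b]`, via Riemann sums of
tagged partitions with uniform mesh. -/
def RiemannIntegrableOn {E : Type*} [NormedAddCommGroup E] [NormedSpace ℝ E]
    (g : ℝ → E) (a b : ℝ) : Prop :=
  ∃ I : E, ∀ ε > (0 : ℝ), ∃ δ > (0 : ℝ), ∀ m : ℕ, ∀ t ξ : ℕ → ℝ,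
    t 0 = a → t m = b → (∀ i < m, t i < t (i + 1)) →
    (∀ i < m, ξ i ∈ Set.Icc (t i) (t (i + 1))) →
    (∀ i < m, t (i + 1) - t i < δ) →
    ‖(∑ i ∈ Finset.range m, (t (i + 1) - t i) • g (ξ i)) - I‖ < ε

theorem mem_Icc_of_le_succ {α : Type*} [Preorder α] {t : ℕ → α} {m i : ℕ}
    (ht : ∀ j < m, t j ≤ t (j + 1)) (hi : i ≤ m) : t i ∈ Icc (t 0) (t m) := by
  have hmono : Monotone fun n => t (min n m) := monotone_nat_of_le_succ fun n => by
    rcases lt_or_ge n m with h | h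
    · simpa [min_eq_left h.le, min_eq_left (Nat.succ_le_of_lt h)] using ht n h
    · simp [min_eq_right h, min_eq_right (h.trans n.le_succ)]
  simpa [min_eq_left hi] using And.intro (hmono (Nat.zero_le i)) (hmono hi)

theorem exists_lt_mem_Icc_of_le_succ {α : Type*} [LinearOrder α] {t : ℕ → α} {m : ℕ}
    (hm : 0 < m) (ht : ∀ j < m, t j ≤ t (j + 1)) {s : α} (hs : s ∈ Icc (t 0) (t m)) :
    ∃ j < m, s ∈ Icc (t j) (t (j + 1)) := by
  rcases hs.2.lt_or_eq with hlt | rfl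
  · obtain ⟨j, hj, hsj⟩ := mem_iUnion₂.1 (Ico_subset_biUnion_Ico m t ⟨hs.1, hlt⟩)
    exact ⟨j, Finset.mem_range.1 hj, Ico_subset_Icc_self hsj⟩
  · refine ⟨m - 1, by omega, ?_, ?_⟩
    · exact (mem_Icc_of_le_succ ht (Nat.sub_le m 1)).2
    · rw [Nat.sub_add_cancel hm]

def HasSmallJumpSets {α : Type*} (g : ℝ → α) (a b : ℝ) : Prop :=
  ∀ ε > 0, ∃ δ > 0, ∃ D : Set ℝ,
    MeasurableSet D ∧ volume (D ∩ Ioc a b) ≤ ENNReal.ofReal ε ∧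
    ∀ s ∈ Icc a b, ∀ s' ∈ Icc a b, |s - s'| < δ → g s ≠ g s' → s ∈ D

def jumpNbhd (p : ℕ → ℝ) (N : ℕ) (δ : ℝ) : Set ℝ :=
  (⋃ k ∈ Finset.range (N + 1), Ioo (p k - δ) (p k + δ)) ∪ Ioi (p N - δ)

theorem measurableSet_jumpNbhd (p : ℕ → ℝ) (N : ℕ) (δ : ℝ) : MeasurableSet (jumpNbhd p N δ) :=
  (MeasurableSet.biUnion (Finset.range (N + 1)).countable_toSet fun _ _ => measurableSet_Ioo).union
    measurableSet_Ioi

theorem volume_jumpNbhd_inter_Ioc_le (p : ℕ → ℝ) (N : ℕ) (δ a b : ℝ) :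
    volume (jumpNbhd p N δ ∩ Ioc a b) ≤
      ENNReal.ofReal (2 * (N + 1) * δ) + ENNReal.ofReal (b - (p N - δ)) := by
  rw [jumpNbhd, union_inter_distrib_right]
  refine (measure_union_le _ _).trans (add_le_add ?_ ?_)
  · calc _ ≤ volume (⋃ k ∈ Finset.range (N + 1), Ioo (p k - δ) (p k + δ)) :=
          measure_mono inter_subset_left
      _ ≤ ∑ k ∈ Finset.range (N + 1), volume (Ioo (p k - δ) (p k + δ)) :=
          measure_biUnion_finset_le _ _
      _ = ENNReal.ofReal (2 * (N + 1) * δ) := by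
          have hlen : ∀ k, volume (Ioo (p k - δ) (p k + δ)) = ENNReal.ofReal (2 * δ) :=
            fun k => by rw [Real.volume_Ioo]; ring_nf
          simp only [hlen, Finset.sum_const, Finset.card_range, nsmul_eq_mul]
          rw [← ENNReal.ofReal_natCast, ← ENNReal.ofReal_mul (by positivity)]
          congr 1; push_cast; ring
  · calc _ ≤ volume (Ioc (p N - δ) b) := measure_mono fun x hx => ⟨hx.1, hx.2.2⟩
      _ = _ := Real.volume_Ioc

section StepFunction

variable {α E : Type*} [NormedAddCommGroup E] {p : ℕ → ℝ} {b : ℝ}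

theorem exists_mem_Ico_of_tendsto (hlim : Tendsto p atTop (𝓝 b)) {s : ℝ}
    (hs : s ∈ Ico (p 0) b) : ∃ n, s ∈ Ico (p n) (p (n + 1)) := by
  obtain ⟨N, hN⟩ := (hlim.eventually (lt_mem_nhds hs.2)).exists
  obtain ⟨n, -, hn⟩ := mem_iUnion₂.1 (Ico_subset_biUnion_Ico N p ⟨hs.1, hN⟩)
  exact ⟨n, hn⟩

theorem StrictMono.lt_of_tendsto (hp : StrictMono p) (hlim : Tendsto p atTop (𝓝 b)) (n : ℕ) :
    p n < b :=
  (hp n.lt_succ_self).trans_le (hp.monotone.ge_of_tendsto hlim (n + 1))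

theorem norm_le_max_of_step {y : ℕ → E} {g : ℝ → E}
    (hstep : ∀ n, ∀ s ∈ Ico (p n) (p (n + 1)), g s = y n) (hlim : Tendsto p atTop (𝓝 b))
    {M : ℝ} (hy : ∀ n, ‖y n‖ ≤ M) :
    ∀ s ∈ Icc (p 0) b, ‖g s‖ ≤ max M ‖g b‖ := by
  intro s hs
  rcases hs.2.lt_or_eq with hsb | rfl
  · obtain ⟨n, hn⟩ := exists_mem_Ico_of_tendsto hlim ⟨hs.1, hsb⟩
    exact hstep n s hn ▸ (hy n).trans (le_max_left _ _)
  · exact le_max_right _ _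

theorem integrableOn_of_step {y : ℕ → E} {g : ℝ → E}
    (hstep : ∀ n, ∀ s ∈ Ico (p n) (p (n + 1)), g s = y n) (hlim : Tendsto p atTop (𝓝 b))
    {M : ℝ} (hy : ∀ n, ‖y n‖ ≤ M) :
    IntegrableOn g (Icc (p 0) b) := by
  have hmeas : AEStronglyMeasurable g (volume.restrict (⋃ n, Ico (p n) (p (n + 1)))) :=
    aestronglyMeasurable_iUnion_iff.2 fun n => aestronglyMeasurable_const.congr <|
      (ae_restrict_mem measurableSet_Ico).mono fun s hs => (hstep n s hs).symm
  have hcover : Ico (p 0) b ⊆ ⋃ n, Ico (p n) (p (n + 1)) := fun s hs =>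
    mem_iUnion.2 (exists_mem_Ico_of_tendsto hlim hs)
  rw [integrableOn_Icc_iff_integrableOn_Ico]
  exact .of_bound measure_Ico_lt_top (hmeas.mono_set hcover) _
    ((ae_restrict_mem measurableSet_Ico).mono fun s hs =>
      norm_le_max_of_step hstep hlim hy s (Ico_subset_Icc_self hs))

theorem exists_jump_mem_Ioc_of_step {y : ℕ → α} {g : ℝ → α}
    (hstep : ∀ n, ∀ s ∈ Ico (p n) (p (n + 1)), g s = y n) (hp : StrictMono p)
    (hlim : Tendsto p atTop (𝓝 b)) {u v : ℝ} (hu : p 0 ≤ u) (huv : u ≤ v) (hv : v ≤ b)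
    (hg : g u ≠ g v) :
    ∃ q ∈ Ioc u v, q = b ∨ q ∈ range p := by
  have huv' : u < v := huv.lt_of_ne fun h => hg (h ▸ rfl)
  rcases hv.lt_or_eq with hvb | rfl
  · obtain ⟨n, hn⟩ := exists_mem_Ico_of_tendsto hlim ⟨hu, huv'.trans hvb⟩
    obtain ⟨n', hn'⟩ := exists_mem_Ico_of_tendsto hlim ⟨hu.trans huv, hvb⟩
    have hnn' : n < n' := by
      refine lt_of_le_of_ne ?_ fun h => hg (by rw [hstep n u hn, hstep n' v hn', h])
      by_contra! h
      linarith [hn.1, hn'.2, hp.monotone (Nat.succ_le_of_lt h)]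
    exact ⟨p (n + 1), ⟨hn.2, hn'.1.trans' (hp.monotone hnn')⟩, Or.inr ⟨n + 1, rfl⟩⟩
  · exact ⟨v, ⟨huv', le_rfl⟩, Or.inl rfl⟩

theorem mem_jumpNbhd_of_step {y : ℕ → α} {g : ℝ → α}
    (hstep : ∀ n, ∀ s ∈ Ico (p n) (p (n + 1)), g s = y n) (hp : StrictMono p)
    (hlim : Tendsto p atTop (𝓝 b)) (N : ℕ) {δ : ℝ} {s s' : ℝ} (hs : s ∈ Icc (p 0) b)
    (hs' : s' ∈ Icc (p 0) b) (hss' : |s - s'| < δ) (hg : g s ≠ g s') :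
    s ∈ jumpNbhd p N δ := by
  obtain ⟨q, hq, hqjump⟩ : ∃ q ∈ Ioc (min s s') (max s s'), q = b ∨ q ∈ range p := by
    rcases le_total s s' with h | h
    · simpa [h] using exists_jump_mem_Ioc_of_step hstep hp hlim hs.1 h hs'.2 hg
    · simpa [h] using exists_jump_mem_Ioc_of_step hstep hp hlim hs'.1 h hs.2 hg.symm
  have hsq : |s - q| < δ := (abs_sub_le_of_le_of_le (min_le_left s s') (le_max_left s s')
    hq.1.le hq.2).trans_lt (by rwa [max_sub_min_eq_abs'])
  rw [abs_sub_lt_iff] at hsq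
  have hpN : p N ≤ b := hp.monotone.ge_of_tendsto hlim N
  rcases hqjump with rfl | ⟨k, rfl⟩
  · exact Or.inr (by simp only [mem_Ioi]; linarith)
  · rcases le_or_gt k N with hkN | hNk
    · exact Or.inl (mem_biUnion (Finset.mem_range.2 (Nat.lt_succ_of_le hkN))
        ⟨by linarith, by linarith⟩)
    · exact Or.inr (by simp only [mem_Ioi]; linarith [hp hNk])

theorem hasSmallJumpSets_of_step {y : ℕ → α} {g : ℝ → α}
    (hstep : ∀ n, ∀ s ∈ Ico (p n) (p (n + 1)), g s = y n) (hp : StrictMono p)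
    (hlim : Tendsto p atTop (𝓝 b)) : HasSmallJumpSets g (p 0) b := by
  intro ε hε
  obtain ⟨N, hN⟩ := (hlim.eventually (lt_mem_nhds (show b - ε / 4 < b by linarith))).exists
  have hNpos : (0 : ℝ) < N + 1 := by positivity
  set δ := ε / (4 * (N + 1))
  have hδ : 0 < δ := by positivity
  have hδε : δ ≤ ε / 4 := div_le_div_of_nonneg_left hε.le (by norm_num) (by linarith)
  refine ⟨δ, hδ, jumpNbhd p N δ, measurableSet_jumpNbhd p N δ, ?_,
    fun s hs s' hs' hss' hg => mem_jumpNbhd_of_step hstep hp hlim N hs hs' hss' hg⟩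
  refine (volume_jumpNbhd_inter_Ioc_le p N δ (p 0) b).trans ?_
  have hpN : p N ≤ b := hp.monotone.ge_of_tendsto hlim N
  rw [← ENNReal.ofReal_add (by positivity) (by linarith)]
  refine ENNReal.ofReal_le_ofReal ?_
  have : 2 * (N + 1) * δ = ε / 2 := by simp only [δ]; field_simp; ring
  linarith

end StepFunction

section Riemann

variable {E : Type*} [NormedAddCommGroup E] [NormedSpace ℝ E]

def riemannSum (g : ℝ → E) (t ξ : ℕ → ℝ) (m : ℕ) : E :=
  ∑ i ∈ Finset.range m, (t (i + 1) - t i) • g (ξ i)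

theorem riemannSum_update_sub (g : ℝ → E) (t ξ : ℕ → ℝ) {m j : ℕ} (hj : j < m) (s : ℝ) :
    riemannSum g t (Function.update ξ j s) m - riemannSum g t ξ m =
      (t (j + 1) - t j) • (g s - g (ξ j)) := by
  rw [riemannSum, riemannSum, ← Finset.sum_sub_distrib, Finset.sum_eq_single_of_mem j
    (Finset.mem_range.2 hj) fun i _ hij => by simp [Function.update_of_ne hij]]
  simp [smul_sub]

theorem exists_partition_mesh_lt {a b δ : ℝ} (hab : a < b) (hδ : 0 < δ) :
    ∃ m : ℕ, ∃ t : ℕ → ℝ, t 0 = a ∧ t m = b ∧ (∀ i < m, t i < t (i + 1)) ∧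
      ∀ i < m, t (i + 1) - t i < δ := by
  obtain ⟨m, hm⟩ := exists_nat_gt ((b - a) / δ)
  have hm0 : (0 : ℝ) < m := (div_pos (sub_pos.2 hab) hδ).trans hm
  have hstep : ∀ i : ℕ, (a + (i + 1 : ℕ) * ((b - a) / m)) - (a + i * ((b - a) / m)) =
      (b - a) / m := fun i => by push_cast; ring
  refine ⟨m, fun i => a + i * ((b - a) / m), by simp, by field_simp; ring, fun i _ => ?_,
    fun i _ => ?_⟩
  · have := hstep i; have : 0 < (b - a) / m := div_pos (sub_pos.2 hab) hm0; linarith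
  · rw [hstep, div_lt_iff₀ hm0]; rwa [div_lt_iff₀ hδ, mul_comm] at hm

theorem RiemannIntegrableOn.exists_norm_le {g : ℝ → E} {a b : ℝ} (hab : a < b)
    (hg : RiemannIntegrableOn g a b) : ∃ M, ∀ s ∈ Icc a b, ‖g s‖ ≤ M := by
  obtain ⟨I, hI⟩ := hg
  obtain ⟨δ, hδ, hsum⟩ := hI 1 one_pos
  obtain ⟨m, t, ht0, htm, hinc, hmesh⟩ := exists_partition_mesh_lt hab hδ
  have hm : 0 < m := Nat.pos_of_ne_zero fun h => by subst h; linarith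
  have hsum' : ∀ ξ : ℕ → ℝ, (∀ i < m, ξ i ∈ Icc (t i) (t (i + 1))) →
      ‖riemannSum g t ξ m - I‖ < 1 := fun ξ hξ => hsum m t ξ ht0 htm hinc hξ hmesh
  have hleft : ∀ i < m, t i ∈ Icc (t i) (t (i + 1)) := fun i hi => ⟨le_rfl, (hinc i hi).le⟩
  have hpiece : ∀ j < m, ∀ s ∈ Icc (t j) (t (j + 1)),
      ‖g s‖ ≤ ‖g (t j)‖ + 2 / (t (j + 1) - t j) := by
    intro j hj s hs
    have hlen : 0 < t (j + 1) - t j := sub_pos.2 (hinc j hj)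
    have hupd : ∀ i < m, Function.update t j s i ∈ Icc (t i) (t (i + 1)) := fun i hi => by
      rcases eq_or_ne i j with rfl | hij
      · simpa using hs
      · simpa [Function.update_of_ne hij] using hleft i hi
    have hdiff : (t (j + 1) - t j) * ‖g s - g (t j)‖ < 2 := by
      have := norm_sub_le (riemannSum g t (Function.update t j s) m - I)
        (riemannSum g t t m - I)
      rw [sub_sub_sub_cancel_right, riemannSum_update_sub g t t hj, norm_smul,
        Real.norm_of_nonneg hlen.le] at this
      linarith [hsum' _ hupd, hsum' t hleft]
    calc ‖g s‖ ≤ ‖g (t j)‖ + ‖g s - g (t j)‖ := norm_le_norm_add_norm_sub' _ _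
      _ ≤ ‖g (t j)‖ + 2 / (t (j + 1) - t j) := by
        gcongr; rw [le_div_iff₀ hlen, mul_comm]; exact hdiff.le
  refine ⟨∑ j ∈ Finset.range m, (‖g (t j)‖ + 2 / (t (j + 1) - t j)), fun s hs => ?_⟩
  obtain ⟨j, hj, hsj⟩ :=
    exists_lt_mem_Icc_of_le_succ hm (fun i hi => (hinc i hi).le) (ht0 ▸ htm ▸ hs)
  refine (hpiece j hj s hsj).trans (Finset.single_le_sum (f := fun j =>
    ‖g (t j)‖ + 2 / (t (j + 1) - t j)) (fun i hi => ?_) (Finset.mem_range.2 hj))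
  have := sub_pos.2 (hinc i (Finset.mem_range.1 hi))
  positivity

theorem norm_riemannSum_sub_integral_le [CompleteSpace E] {g : ℝ → E} {φ : ℝ → ℝ}
    {t ξ : ℕ → ℝ} {m : ℕ} (ht : ∀ i < m, t i ≤ t (i + 1))
    (hg : ∀ i < m, IntervalIntegrable g volume (t i) (t (i + 1)))
    (hφ : ∀ i < m, IntervalIntegrable φ volume (t i) (t (i + 1)))
    (hbound : ∀ i < m, ∀ s ∈ Icc (t i) (t (i + 1)), ‖g (ξ i) - g s‖ ≤ φ s) :
    ‖riemannSum g t ξ m - ∫ s in t 0..t m, g s‖ ≤ ∫ s in t 0..t m, φ s := by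
  have hpiece : ∀ i < m, ‖(t (i + 1) - t i) • g (ξ i) - ∫ s in t i..t (i + 1), g s‖ ≤
      ∫ s in t i..t (i + 1), φ s := fun i hi => by
    rw [← intervalIntegral.integral_const, ← intervalIntegral.integral_sub
      intervalIntegrable_const (hg i hi)]
    exact (intervalIntegral.norm_integral_le_integral_norm (ht i hi)).trans
      (intervalIntegral.integral_mono_on (ht i hi) (intervalIntegrable_const.sub (hg i hi)).norm
        (hφ i hi) (hbound i hi))
  rw [← intervalIntegral.sum_integral_adjacent_intervals hg,
    ← intervalIntegral.sum_integral_adjacent_intervals hφ, riemannSum, ← Finset.sum_sub_distrib]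
  exact (norm_sum_le _ _).trans
    (Finset.sum_le_sum fun i hi => hpiece i (Finset.mem_range.1 hi))

theorem riemannIntegrableOn_of_hasSmallJumpSets [CompleteSpace E] {g : ℝ → E} {a b M : ℝ}
    (hint : IntegrableOn g (Icc a b)) (hM : ∀ s ∈ Icc a b, ‖g s‖ ≤ M)
    (hjump : HasSmallJumpSets g a b) :
    RiemannIntegrableOn g a b := by
  refine ⟨∫ s in a..b, g s, fun ε hε => ?_⟩
  obtain ⟨δ, hδ, D, hD, hDvol, hDjump⟩ := hjump (ε / (2 * |M| + 1)) (by positivity)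
  refine ⟨δ, hδ, fun m t ξ ht0 htm hinc hξ hmesh => ?_⟩
  have hle : ∀ i < m, t i ≤ t (i + 1) := fun i hi => (hinc i hi).le
  have hab : a ≤ b := ht0 ▸ htm ▸ (mem_Icc_of_le_succ hle le_rfl).1
  have hpiece : ∀ i < m, Icc (t i) (t (i + 1)) ⊆ Icc a b := fun i hi =>
    ht0 ▸ htm ▸ Icc_subset_Icc (mem_Icc_of_le_succ hle hi.le).1
      (mem_Icc_of_le_succ hle (Nat.succ_le_of_lt hi)).2
  set φ : ℝ → ℝ := D.indicator fun _ => 2 * M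
  have hφint : IntegrableOn φ (Icc a b) :=
    (integrableOn_const (by simp [Real.volume_Icc])).indicator hD
  have hbound : ∀ i < m, ∀ s ∈ Icc (t i) (t (i + 1)), ‖g (ξ i) - g s‖ ≤ φ s := by
    intro i hi s hs
    by_cases hsD : s ∈ D
    · rw [show φ s = 2 * M from indicator_of_mem hsD _, two_mul]
      exact (norm_sub_le _ _).trans
        (add_le_add (hM _ (hpiece i hi (hξ i hi))) (hM _ (hpiece i hi hs)))
    · have hclose : |s - ξ i| < δ :=
        (abs_sub_le_of_le_of_le hs.1 hs.2 (hξ i hi).1 (hξ i hi).2).trans_lt (hmesh i hi)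
      rw [show φ s = 0 from indicator_of_notMem hsD _, of_not_not fun h =>
        hsD (hDjump s (hpiece i hi hs) (ξ i) (hpiece i hi (hξ i hi)) hclose (Ne.symm h)),
        sub_self, norm_zero]
  have hφ : ∫ s in a..b, φ s = volume.real (D ∩ Ioc a b) * (2 * M) := by
    rw [intervalIntegral.integral_of_le hab, integral_indicator_const _ hD,
      measureReal_restrict_apply hD, smul_eq_mul]
  have hvol : volume.real (D ∩ Ioc a b) ≤ ε / (2 * |M| + 1) :=
    ENNReal.toReal_le_of_le_ofReal (by positivity) hDvol
  have hsmall : volume.real (D ∩ Ioc a b) * (2 * M) < ε := calc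
    _ ≤ volume.real (D ∩ Ioc a b) * (2 * |M|) := by
      gcongr; exact le_abs_self M
    _ ≤ ε / (2 * |M| + 1) * (2 * |M|) := by gcongr
    _ < ε := by
      rw [div_mul_eq_mul_div, div_lt_iff₀ (by positivity)]; nlinarith
  calc ‖riemannSum g t ξ m - ∫ s in a..b, g s‖ ≤ ∫ s in a..b, φ s := by
        subst ht0 htm
        exact norm_riemannSum_sub_integral_le hle
          (fun i hi => (intervalIntegrable_iff_integrableOn_Icc_of_le (hle i hi)).2
            (hint.mono_set (hpiece i hi)))
          (fun i hi => (intervalIntegrable_iff_integrableOn_Icc_of_le (hle i hi)).2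
            (hφint.mono_set (hpiece i hi)))
          hbound
    _ < ε := hφ ▸ hsmall

end Riemann

theorem riemannIntegrableOn_step_iff {E : Type*} [NormedAddCommGroup E] [NormedSpace ℝ E]
    [CompleteSpace E] {p : ℕ → ℝ} {b : ℝ} {y : ℕ → E} {g : ℝ → E}
    (hstep : ∀ n, ∀ s ∈ Ico (p n) (p (n + 1)), g s = y n) (hp : StrictMono p)
    (hlim : Tendsto p atTop (𝓝 b)) :
    RiemannIntegrableOn g (p 0) b ↔ ∃ M : ℝ, ∀ n, ‖y n‖ ≤ M := by
  constructor
  · intro hg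
    obtain ⟨M, hM⟩ := hg.exists_norm_le (hp.lt_of_tendsto hlim 0)
    refine ⟨M, fun n => ?_⟩
    rw [← hstep n (p n) ⟨le_rfl, hp n.lt_succ_self⟩]
    exact hM _ ⟨hp.monotone n.zero_le, (hp.lt_of_tendsto hlim n).le⟩
  · rintro ⟨M, hy⟩
    exact riemannIntegrableOn_of_hasSmallJumpSets (integrableOn_of_step hstep hlim hy)
      (norm_le_max_of_step hstep hlim hy) (hasSmallJumpSets_of_step hstep hp hlim)

theorem step_riemannIntegrable_iff_bounded_general {E : Type*}
    [NormedAddCommGroup E] [NormedSpace ℝ E] [CompleteSpace E]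
    (y : ℕ → E) (g : ℝ → E)
    (hstep : ∀ n : ℕ, ∀ t ∈ Set.Ico (1 - (1 / 2 : ℝ) ^ n)
      (1 - (1 / 2 : ℝ) ^ (n + 1)), g t = y n) :
    RiemannIntegrableOn g 0 1 ↔ ∃ M : ℝ, ∀ n, ‖y n‖ ≤ M := by
  have hp : StrictMono fun n : ℕ => 1 - (1 / 2 : ℝ) ^ n := fun m n hmn => by
    simpa using pow_lt_pow_right_of_lt_one₀ (by norm_num : (0 : ℝ) < 1 / 2) (by norm_num) hmn
  have hlim : Tendsto (fun n : ℕ => 1 - (1 / 2 : ℝ) ^ n) atTop (𝓝 1) := by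
    simpa using (tendsto_pow_atTop_nhds_zero_of_lt_one (by norm_num : (0 : ℝ) ≤ 1 / 2)
      (by norm_num)).const_sub 1
  simpa using riemannIntegrableOn_step_iff hstep hp hlim

/-- The step mapping `g(t) = y n` on `[1 − 2⁻ⁿ, 1 − 2⁻ⁿ⁻¹)`, `g 1 = 0`, is
Riemann integrable on `[0,1]` iff the sequence `(y n)` is bounded. -/
theorem step_riemannIntegrable_iff_bounded {E : Type*}
    [NormedAddCommGroup E] [NormedSpace ℝ E] [CompleteSpace E]
    (y : ℕ → E) (g : ℝ → E)
    (hstep : ∀ n : ℕ, ∀ t ∈ Set.Ico (1 - (1 / 2 : ℝ) ^ n)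
      (1 - (1 / 2 : ℝ) ^ (n + 1)), g t = y n)
    (h1 : g 1 = 0) :
    RiemannIntegrableOn g 0 1 ↔ ∃ M : ℝ, ∀ n, ‖y n‖ ≤ M :=
  step_riemannIntegrable_iff_bounded_general y g hstep
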